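/- Let ⟨F, G, 𝔽, 𝔾, H_grd, F_exp, G_exp, θ⟩ be an interpolant lifting base, let 𝔽𝔾 = 𝔽 ∪ 𝔾, let {t₁,…,tₙ} be the set of the 𝔽𝔾-terms with an 𝔽𝔾-terms-maximal occurrence in H_grd, ordered such that if tᵢ is a strict subterm of tⱼ then i < j, let v₁,…,vₙ be fresh variables, let σ = {vᵢ ↦ tᵢ}, and for each i let Qᵢ = ∃ if tᵢ is an 𝔽-term and Qᵢ = ∀ if tᵢ is a 𝔾-term. Then Q₁v₁ … Qₙvₙ H_grd⁻σ ⊨ G. -/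

import Mathlib

open Classical

namespace CTIF

/-- First-order terms: variables and applications of function symbols
(a function symbol is a natural number used with an arity). -/
inductive Tm : Type where
  | var : ℕ → Tm
  | app : ℕ → (n : ℕ) → (Fin n → Tm) → Tm

/-- First-order formulas without equality. -/
inductive Fml : Type where
  | tru : Fml
  | fls : Fml
  | atom : ℕ → (n : ℕ) → (Fin n → Tm) → Fml
  | neg : Fml → Fml
  | conj : Fml → Fml → Fml
  | disj : Fml → Fml → Fml
  | all : ℕ → Fml → Fml
  | exi : ℕ → Fml → Fml

/-- A structure: interpretation of all function and predicate symbols (at every arity). -/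
structure Struc (D : Type) : Type where
  fn : ℕ → (n : ℕ) → (Fin n → D) → D
  pr : ℕ → (n : ℕ) → (Fin n → D) → Prop

def Tm.eval {D : Type} (M : Struc D) (a : ℕ → D) : Tm → D
  | .var x => a x
  | .app f n ts => M.fn f n (fun i => (ts i).eval M a)

def Fml.sat {D : Type} : Fml → Struc D → (ℕ → D) → Prop
  | .tru, _, _ => True
  | .fls, _, _ => False
  | .atom p n ts, M, a => M.pr p n (fun i => (ts i).eval M a)
  | .neg F, M, a => ¬ F.sat M a
  | .conj F G, M, a => F.sat M a ∧ G.sat M a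
  | .disj F G, M, a => F.sat M a ∨ G.sat M a
  | .all x F, M, a => ∀ d, F.sat M (Function.update a x d)
  | .exi x F, M, a => ∃ d, F.sat M (Function.update a x d)

/-- Entailment: every model (with any variable assignment) of `F` satisfies `G`. -/
def entails (F G : Fml) : Prop :=
  ∀ (D : Type), Nonempty D → ∀ (M : Struc D) (a : ℕ → D), F.sat M a → G.sat M a

def Tm.vars : Tm → Set ℕ
  | .var x => {x}
  | .app _ _ ts => ⋃ i, (ts i).vars

/-- Function symbols (with their arity) occurring in a term. -/
def Tm.funs : Tm → Set (ℕ × ℕ)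
  | .var _ => ∅
  | .app f n ts => insert (f, n) (⋃ i, (ts i).funs)

def Tm.isGround (t : Tm) : Prop := t.vars = ∅

/-- `t` is a ground term all of whose function symbols come from `S`. -/
def Tm.builtFrom (S : Set (ℕ × ℕ)) : Tm → Prop
  | .var _ => False
  | .app f n ts => (f, n) ∈ S ∧ ∀ i, Tm.builtFrom S (ts i)

/-- `t` occurs (as a subterm) in the given term. -/
def Tm.occursIn (t : Tm) : Tm → Prop
  | .var x => t = Tm.var x
  | .app f n ts => t = Tm.app f n ts ∨ ∃ i, Tm.occursIn t (ts i)

/-- `s` is a strict subterm of `t`. -/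
def Tm.strictSub (s t : Tm) : Prop := s ≠ t ∧ s.occursIn t

def Fml.funs : Fml → Set (ℕ × ℕ)
  | .tru => ∅
  | .fls => ∅
  | .atom _ _ ts => ⋃ i, (ts i).funs
  | .neg F => F.funs
  | .conj F G => F.funs ∪ G.funs
  | .disj F G => F.funs ∪ G.funs
  | .all _ F => F.funs
  | .exi _ F => F.funs

/-- Predicate symbols with the polarity (`true` = positive) of their occurrences;
the second argument is the polarity of the context. -/
def Fml.preds : Fml → Bool → Set (ℕ × Bool)
  | .tru, _ => ∅
  | .fls, _ => ∅
  | .atom p _ _, pol => {(p, pol)}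
  | .neg F, pol => F.preds (!pol)
  | .conj F G, pol => F.preds pol ∪ G.preds pol
  | .disj F G, pol => F.preds pol ∪ G.preds pol
  | .all _ F, pol => F.preds pol
  | .exi _ F, pol => F.preds pol

/-- pred(F): predicates paired with the polarities of their occurrences in `F`. -/
def Fml.pred (F : Fml) : Set (ℕ × Bool) := F.preds true

/-- Predicate symbols occurring in a formula (disregarding polarity). -/
def Fml.predSyms : Fml → Set ℕ
  | .tru => ∅
  | .fls => ∅
  | .atom p _ _ => {p}
  | .neg F => F.predSyms
  | .conj F G => F.predSyms ∪ G.predSyms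
  | .disj F G => F.predSyms ∪ G.predSyms
  | .all _ F => F.predSyms
  | .exi _ F => F.predSyms

def Fml.free : Fml → Set ℕ
  | .tru => ∅
  | .fls => ∅
  | .atom _ _ ts => ⋃ i, (ts i).vars
  | .neg F => F.free
  | .conj F G => F.free ∪ G.free
  | .disj F G => F.free ∪ G.free
  | .all x F => F.free \ {x}
  | .exi x F => F.free \ {x}

/-- Variables occurring bound (i.e. quantified upon) in a formula. -/
def Fml.bound : Fml → Set ℕ
  | .tru => ∅
  | .fls => ∅
  | .atom _ _ _ => ∅
  | .neg F => F.bound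
  | .conj F G => F.bound ∪ G.bound
  | .disj F G => F.bound ∪ G.bound
  | .all x F => insert x F.bound
  | .exi x F => insert x F.bound

def Fml.isQF : Fml → Prop
  | .tru => True
  | .fls => True
  | .atom _ _ _ => True
  | .neg F => F.isQF
  | .conj F G => F.isQF ∧ G.isQF
  | .disj F G => F.isQF ∧ G.isQF
  | .all _ _ => False
  | .exi _ _ => False

def Fml.isGround (F : Fml) : Prop := F.isQF ∧ F.free = ∅

def Fml.isSentence (F : Fml) : Prop := F.free = ∅

/-- Substitutions: mappings from variables to terms. -/
abbrev Subst := ℕ → Tm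

def Subst.dom (σ : Subst) : Set ℕ := {x | σ x ≠ Tm.var x}

def Subst.rng (σ : Subst) : Set Tm := {t | ∃ x ∈ σ.dom, σ x = t}

def Subst.isGround (σ : Subst) : Prop := ∀ x ∈ σ.dom, (σ x).isGround

/-- Injective substitution: distinct domain variables are mapped to distinct terms. -/
def Subst.inj (σ : Subst) : Prop := ∀ x ∈ σ.dom, ∀ y ∈ σ.dom, σ x = σ y → x = y

def Tm.subst (σ : Subst) : Tm → Tm
  | .var x => σ x
  | .app f n ts => .app f n (fun i => (ts i).subst σ)

/-- Substitution application to formulas (free occurrences of variables are replaced). -/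
def Fml.subst (σ : Subst) : Fml → Fml
  | .tru => .tru
  | .fls => .fls
  | .atom p n ts => .atom p n (fun i => (ts i).subst σ)
  | .neg F => .neg (F.subst σ)
  | .conj F G => .conj (F.subst σ) (G.subst σ)
  | .disj F G => .disj (F.subst σ) (G.subst σ)
  | .all x F => .all x (F.subst (Function.update σ x (Tm.var x)))
  | .exi x F => .exi x (F.subst (Function.update σ x (Tm.var x)))

/-- Inverse application of an injective substitution to a term:
all rng(σ)-maximal occurrences of terms in the range of σ are replaced by
the corresponding domain variable. -/
noncomputable def Tm.inv (σ : Subst) : Tm → Tm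
  | .var x =>
      if h : ∃ v ∈ Subst.dom σ, σ v = Tm.var x then Tm.var h.choose else Tm.var x
  | .app f n ts =>
      if h : ∃ v ∈ Subst.dom σ, σ v = Tm.app f n ts then Tm.var h.choose
      else .app f n (fun i => Tm.inv σ (ts i))

/-- Inverse application of an injective substitution to a formula. -/
noncomputable def Fml.inv (σ : Subst) : Fml → Fml
  | .tru => .tru
  | .fls => .fls
  | .atom p n ts => .atom p n (fun i => Tm.inv σ (ts i))
  | .neg F => .neg (F.inv σ)
  | .conj F G => .conj (F.inv σ) (G.inv σ)
  | .disj F G => .disj (F.inv σ) (G.inv σ)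
  | .all x F => .all x (F.inv σ)
  | .exi x F => .exi x (F.inv σ)

/-- `H` is a Craig-Lyndon interpolant of `F` and `G`. -/
def CLInterp (F G H : Fml) : Prop :=
  entails F H ∧ entails H G ∧
  H.pred ⊆ F.pred ∩ G.pred ∧
  H.funs ⊆ F.funs ∩ G.funs ∧
  H.free ⊆ F.free ∩ G.free

/-- `H` is a Craig interpolant of `F` and `G` (no polarity constraint). -/
def CraigInterp (F G H : Fml) : Prop :=
  entails F H ∧ entails H G ∧
  H.predSyms ⊆ F.predSyms ∩ G.predSyms ∧
  H.funs ⊆ F.funs ∩ G.funs ∧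
  H.free ⊆ F.free ∩ G.free

/-- An S-term: a term whose outermost function symbol is in `S`. -/
def isSTerm (S : Set (ℕ × ℕ)) : Tm → Prop
  | .var _ => False
  | .app f n _ => (f, n) ∈ S

def STerms (S : Set (ℕ × ℕ)) : Set Tm := {t | isSTerm S t}

/-- `t` has a `T`-maximal occurrence in the given term: an occurrence that is
not within an occurrence of another member of `T`. -/
def Tm.hasMaxOcc (T : Set Tm) (t : Tm) : Tm → Prop
  | .var x => Tm.var x ∈ T ∧ t = Tm.var x
  | .app f n ts =>
      (Tm.app f n ts ∈ T ∧ t = Tm.app f n ts) ∨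
      (Tm.app f n ts ∉ T ∧ ∃ i, Tm.hasMaxOcc T t (ts i))

/-- `t` has a `T`-maximal occurrence in the formula. -/
def Fml.hasMaxOcc (T : Set Tm) (t : Tm) : Fml → Prop
  | .tru => False
  | .fls => False
  | .atom _ _ ts => ∃ i, Tm.hasMaxOcc T t (ts i)
  | .neg F => F.hasMaxOcc T t
  | .conj F G => F.hasMaxOcc T t ∨ G.hasMaxOcc T t
  | .disj F G => F.hasMaxOcc T t ∨ G.hasMaxOcc T t
  | .all _ F => F.hasMaxOcc T t
  | .exi _ F => F.hasMaxOcc T t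

/-- Universal quantification over a list of variables. -/
def alls (xs : List ℕ) (F : Fml) : Fml := xs.foldr Fml.all F

end CTIF
namespace CTIF

/-- `M'` agrees with `M` except possibly in the interpretation of the function
symbols (with arity) in `S`. -/
def agreeExcept {D : Type} (M M' : Struc D) (S : Set (ℕ × ℕ)) : Prop :=
  M'.pr = M.pr ∧ ∀ g n, (g, n) ∉ S → M'.fn g n = M.fn g n

/-- Interpolant lifting base ⟨F, G, 𝔽, 𝔾, H_grd, F_exp, G_exp, θ⟩
(Definition of "interpolant lifting base"). -/
def IsLiftBase (F G : Fml) (FS GS : Set (ℕ × ℕ)) (Hg Fe Ge : Fml) (θ : Subst) : Prop :=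
  F.isSentence ∧ G.isSentence ∧
  FS ∩ GS = ∅ ∧
  Hg.isGround ∧ Fe.isQF ∧ Ge.isQF ∧ Subst.isGround θ ∧
  -- (i)  F ⊨ ∃𝔽 ∀u F_exp, semantically via expansions:
  (∀ (D : Type), Nonempty D → ∀ M : Struc D, (∀ a, F.sat M a) →
    ∃ M' : Struc D, agreeExcept M M' FS ∧ ∀ a, Fe.sat M' a) ∧
  -- (i') ∀𝔾 ∃v G_exp ⊨ G, semantically via reinterpretations:
  (∀ (D : Type), Nonempty D → ∀ M : Struc D,
    (∀ M' : Struc D, agreeExcept M M' GS → ∃ a, Ge.sat M' a) → ∀ a, G.sat M a) ∧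
  -- (ii), (ii')
  Fe.pred ⊆ F.pred ∧ Ge.pred ⊆ G.pred ∧
  -- (iii), (iii')
  Fe.funs ⊆ (F.funs ∩ G.funs) ∪ FS ∧ Ge.funs ⊆ (F.funs ∩ G.funs) ∪ GS ∧
  -- (iv), (iv')
  F.funs ∩ GS = ∅ ∧ G.funs ∩ FS = ∅ ∧
  -- (v)
  Subst.dom θ = Fe.free ∪ Ge.free ∧
  -- (vi)
  (∃ c₀ : ℕ, (c₀, 0) ∈ FS ∪ GS ∧
    ∀ x ∈ Subst.dom θ, (θ x).funs ⊆ Fe.funs ∪ Ge.funs ∪ {(c₀, 0)}) ∧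
  -- (vii)
  CLInterp (Fe.subst θ) (Ge.subst θ) Hg

/-- The lifted formula Q₁v₁ … Qₙvₙ body, where Qᵢ = ∃ if tᵢ is an 𝔽-term
(its outermost symbol is in `FS`) and Qᵢ = ∀ otherwise. -/
noncomputable def lifted (n : ℕ) (v : Fin n → ℕ) (tl : Fin n → Tm)
    (FS : Set (ℕ × ℕ)) (body : Fml) : Fml :=
  (List.finRange n).foldr
    (fun i acc => if isSTerm FS (tl i) then Fml.exi (v i) acc else Fml.all (v i) acc)
    body

end CTIF
/-!
Let `M` satisfy the lifted formula and let `M'` reinterpret the 𝔾-symbols of `M`. Play the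
quantifier prefix in `M`: the ∃-variables take `M`'s witnesses, and the ∀-variable `vⱼ` of a
𝔾-term `tⱼ = g(s₁, …, sₖ)` takes the value of `g` in `M'` at the values of the `sᵢ⁻σ` in `M'`.
This is well defined because, by the ordering of the `tᵢ`, the `sᵢ⁻σ` only mention variables of
earlier terms. Interpreting a ground term `t` as the value of `t⁻σ` in `M'` turns the term algebra
into a model `T` of `H_grd`, and this interpretation is a strong homomorphism `T → M'` on all
symbols outside 𝔽. Since `H_grd ⊨ G_exp θ`, `T` satisfies `G_exp θ`. `G_exp` has no 𝔽-symbols,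
so `M'` satisfies `G_exp`, and (i') yields `G`.
-/

namespace CTIF

open Function

def Tm.size : Tm → ℕ
  | .var _ => 1
  | .app _ _ ts => ∑ i, (ts i).size + 1

theorem Tm.size_arg_lt (f k : ℕ) (ts : Fin k → Tm) (i : Fin k) :
    (ts i).size < (Tm.app f k ts).size :=
  Nat.lt_succ_of_le
    (Finset.single_le_sum (f := fun j => (ts j).size) (fun _ _ => Nat.zero_le _) (Finset.mem_univ i))

theorem Tm.occursIn_refl (t : Tm) : t.occursIn t := by
  cases t <;> simp [Tm.occursIn]

theorem Tm.size_le_of_occursIn {s t : Tm} (h : s.occursIn t) : s.size ≤ t.size := by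
  induction t with
  | var x => rw [show s = .var x from h]
  | app f k ts ih =>
    rcases h with rfl | ⟨i, hi⟩
    · rfl
    · exact (ih i hi).trans (Tm.size_arg_lt f k ts i).le

theorem Tm.strictSub_app_of_occursIn {s : Tm} {f k : ℕ} {ts : Fin k → Tm} {i : Fin k}
    (h : s.occursIn (ts i)) : s.strictSub (.app f k ts) := by
  refine ⟨fun hs => ?_, .inr ⟨i, h⟩⟩
  subst hs
  exact (Tm.size_le_of_occursIn h).not_gt (Tm.size_arg_lt f k ts i)

theorem Tm.eval_congr {D : Type} {M : Struc D} {a a' : ℕ → D} {t : Tm}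
    (h : ∀ x ∈ t.vars, a x = a' x) : t.eval M a = t.eval M a' := by
  induction t with
  | var x => exact h x rfl
  | app f k ts ih =>
    simp only [Tm.eval]
    congr 1
    funext i
    exact ih i fun x hx => h x (Set.mem_iUnion.2 ⟨i, hx⟩)

theorem Tm.eval_subst {D : Type} (M : Struc D) (a : ℕ → D) (θ : Subst) (t : Tm) :
    (t.subst θ).eval M a = t.eval M fun x => (θ x).eval M a := by
  induction t with
  | var x => rfl
  | app f k ts ih =>
    simp only [Tm.subst, Tm.eval, ih]

theorem Fml.sat_subst_iff {D : Type} {M : Struc D} {a : ℕ → D} {θ : Subst} {E : Fml}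
    (hE : E.isQF) : (E.subst θ).sat M a ↔ E.sat M fun x => (θ x).eval M a := by
  induction E with
  | tru | fls => rfl
  | atom p k ts => simp only [Fml.subst, Fml.sat, Tm.eval_subst]
  | neg E ih => exact not_congr (ih hE)
  | conj E₁ E₂ ih₁ ih₂ => exact and_congr (ih₁ hE.1) (ih₂ hE.2)
  | disj E₁ E₂ ih₁ ih₂ => exact or_congr (ih₁ hE.1) (ih₂ hE.2)
  | all | exi => exact hE.elim

structure IsStrongHomExcept {D₁ D₂ : Type} (S : Set (ℕ × ℕ)) (h : D₁ → D₂)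
    (N₁ : Struc D₁) (N₂ : Struc D₂) : Prop where
  pr_iff : ∀ p k ds, N₁.pr p k ds ↔ N₂.pr p k (h ∘ ds)
  fn_eq : ∀ f k, (f, k) ∉ S → ∀ ds, h (N₁.fn f k ds) = N₂.fn f k (h ∘ ds)

namespace IsStrongHomExcept

variable {D₁ D₂ : Type} {S : Set (ℕ × ℕ)} {h : D₁ → D₂} {N₁ : Struc D₁} {N₂ : Struc D₂}

theorem eval_eq (hN : IsStrongHomExcept S h N₁ N₂) {t : Tm} (ht : Disjoint t.funs S)
    (a : ℕ → D₁) : h (t.eval N₁ a) = t.eval N₂ (h ∘ a) := by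
  induction t with
  | var x => rfl
  | app f k ts ih =>
    simp only [Tm.funs, Set.disjoint_insert_left, Set.disjoint_iUnion_left] at ht
    simp only [Tm.eval]
    rw [hN.fn_eq f k ht.1]
    congr 1
    funext i
    exact ih i (ht.2 i)

theorem sat_iff (hN : IsStrongHomExcept S h N₁ N₂) {E : Fml} (hE : E.isQF)
    (hES : Disjoint E.funs S) (a : ℕ → D₁) : E.sat N₁ a ↔ E.sat N₂ (h ∘ a) := by
  induction E with
  | tru | fls => rfl
  | atom p k ts =>
    simp only [Fml.funs, Set.disjoint_iUnion_left] at hES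
    simp only [Fml.sat, hN.pr_iff]
    exact Iff.of_eq (congrArg _ (funext fun i => hN.eval_eq (hES i) a))
  | neg E ih => exact not_congr (ih hE hES)
  | conj E₁ E₂ ih₁ ih₂ =>
    rw [Fml.funs, Set.disjoint_union_left] at hES
    exact and_congr (ih₁ hE.1 hES.1) (ih₂ hE.2 hES.2)
  | disj E₁ E₂ ih₁ ih₂ =>
    rw [Fml.funs, Set.disjoint_union_left] at hES
    exact or_congr (ih₁ hE.1 hES.1) (ih₂ hE.2 hES.2)
  | all | exi => exact hE.elim

end IsStrongHomExcept

theorem agreeExcept.isStrongHomExcept {D : Type} {M M' : Struc D} {S : Set (ℕ × ℕ)}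
    (h : agreeExcept M M' S) : IsStrongHomExcept S id M' M :=
  ⟨fun p k ds => by rw [h.1]; rfl, fun f k hf ds => by rw [h.2 f k hf]; rfl⟩

def Struc.termModel {D : Type} (N : Struc D) (h : Tm → D) : Struc Tm :=
  ⟨Tm.app, fun p k ts => N.pr p k (h ∘ ts)⟩

theorem Tm.eval_termModel_var {D : Type} (N : Struc D) (h : Tm → D) (t : Tm) :
    t.eval (N.termModel h) .var = t := by
  induction t with
  | var x => rfl
  | app f k ts ih => exact congrArg (Tm.app f k) (funext ih)

theorem Fml.isQF_inv {σ : Subst} {E : Fml} (hE : E.isQF) : (E.inv σ).isQF := by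
  induction E with
  | tru | fls | atom => trivial
  | neg E ih => exact ih hE
  | conj E₁ E₂ ih₁ ih₂ | disj E₁ E₂ ih₁ ih₂ => exact ⟨ih₁ hE.1, ih₂ hE.2⟩
  | all | exi => exact hE.elim

theorem Fml.sat_inv_iff {D : Type} {E : Fml} (hE : E.isQF) (σ : Subst) (N : Struc D)
    (b : ℕ → D) :
    (E.inv σ).sat N b ↔ E.sat (N.termModel fun t => (t.inv σ).eval N b) .var := by
  induction E with
  | tru | fls => rfl
  | atom p k ts =>
    simp only [Fml.inv, Fml.sat, Tm.eval_termModel_var]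
    rfl
  | neg E ih => exact not_congr (ih hE)
  | conj E₁ E₂ ih₁ ih₂ => exact and_congr (ih₁ hE.1) (ih₂ hE.2)
  | disj E₁ E₂ ih₁ ih₂ => exact or_congr (ih₁ hE.1) (ih₂ hE.2)
  | all | exi => exact hE.elim

theorem Tm.inv_of_mem_rng {σ : Subst} {t : Tm} (h : t ∈ σ.rng) :
    ∃ y ∈ σ.dom, σ y = t ∧ t.inv σ = .var y := by
  obtain ⟨hy, hσy⟩ := h.choose_spec
  cases t <;> exact ⟨_, hy, hσy, by simp only [Tm.inv]; exact dif_pos h⟩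

theorem Tm.inv_app_of_not_mem_rng {σ : Subst} {f k : ℕ} {ts : Fin k → Tm}
    (h : Tm.app f k ts ∉ σ.rng) : (Tm.app f k ts).inv σ = .app f k fun i => (ts i).inv σ := by
  simp only [Tm.inv]
  exact dif_neg h

theorem Tm.vars_inv_subset (σ : Subst) (t : Tm) :
    (t.inv σ).vars ⊆ {y | y ∈ σ.dom ∧ (σ y).occursIn t} ∪ t.vars := by
  by_cases hr : t ∈ σ.rng
  · obtain ⟨y, hy, hσy, hinv⟩ := Tm.inv_of_mem_rng hr
    rw [hinv, Tm.vars, Set.singleton_subset_iff]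
    exact .inl ⟨hy, hσy ▸ t.occursIn_refl⟩
  induction t with
  | var x =>
    have hinv : (Tm.var x).inv σ = .var x := dif_neg hr
    rw [hinv]
    exact Set.subset_union_right
  | app f k ts ih =>
    rw [Tm.inv_app_of_not_mem_rng hr, Tm.vars, Set.iUnion_subset_iff]
    intro i x hx
    by_cases hri : ts i ∈ σ.rng
    · obtain ⟨y, hy, hσy, hinv⟩ := Tm.inv_of_mem_rng hri
      rw [hinv, Tm.vars, Set.mem_singleton_iff] at hx
      subst hx
      exact .inl ⟨hy, .inr ⟨i, hσy ▸ (ts i).occursIn_refl⟩⟩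
    · rcases ih i hri hx with ⟨hy, hocc⟩ | hx
      · exact .inl ⟨hy, .inr ⟨i, hocc⟩⟩
      · exact .inr (Set.mem_iUnion.2 ⟨i, hx⟩)

theorem Tm.disjoint_funs_inv {S : Set (ℕ × ℕ)} {σ : Subst} {t : Tm}
    (h : ∀ s, Tm.hasMaxOcc (STerms S) s t → s ∈ σ.rng) : Disjoint (t.inv σ).funs S := by
  by_cases hr : t ∈ σ.rng
  · obtain ⟨y, -, -, hinv⟩ := Tm.inv_of_mem_rng hr
    rw [hinv, Tm.funs]
    exact Set.empty_disjoint S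
  induction t with
  | var x =>
    have hinv : (Tm.var x).inv σ = .var x := dif_neg hr
    rw [hinv, Tm.funs]
    exact Set.empty_disjoint S
  | app f k ts ih =>
    have hfS : Tm.app f k ts ∉ STerms S := fun hS => hr (h _ (.inl ⟨hS, rfl⟩))
    rw [Tm.inv_app_of_not_mem_rng hr, Tm.funs, Set.disjoint_insert_left, Set.disjoint_iUnion_left]
    refine ⟨hfS, fun i => ?_⟩
    have hi : ∀ s, Tm.hasMaxOcc (STerms S) s (ts i) → s ∈ σ.rng :=
      fun s hs => h s (.inr ⟨hfS, i, hs⟩)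
    by_cases hri : ts i ∈ σ.rng
    · obtain ⟨y, -, -, hinv⟩ := Tm.inv_of_mem_rng hri
      rw [hinv, Tm.funs]
      exact Set.empty_disjoint S
    · exact ih i hi hri

theorem Fml.disjoint_funs_inv {S : Set (ℕ × ℕ)} {σ : Subst} {E : Fml}
    (h : ∀ s, E.hasMaxOcc (STerms S) s → s ∈ σ.rng) : Disjoint (E.inv σ).funs S := by
  induction E with
  | tru | fls => exact Set.empty_disjoint S
  | atom p k ts =>
    simp only [Fml.inv, Fml.funs, Set.disjoint_iUnion_left]
    exact fun i => Tm.disjoint_funs_inv fun s hs => h s ⟨i, hs⟩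
  | neg E ih | all _ E ih | exi _ E ih => exact ih h
  | conj E₁ E₂ ih₁ ih₂ | disj E₁ E₂ ih₁ ih₂ =>
    exact Set.disjoint_union_left.2 ⟨ih₁ fun s hs => h s (.inl hs), ih₂ fun s hs => h s (.inr hs)⟩

theorem Tm.mem_of_hasMaxOcc {T : Set Tm} {s t : Tm} (h : Tm.hasMaxOcc T s t) : s ∈ T := by
  induction t with
  | var x => exact h.2 ▸ h.1
  | app f k ts ih =>
    rcases h with ⟨hT, rfl⟩ | ⟨-, i, hi⟩
    exacts [hT, ih i hi]

theorem Tm.vars_subset_of_hasMaxOcc {T : Set Tm} {s t : Tm} (h : Tm.hasMaxOcc T s t) :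
    s.vars ⊆ t.vars := by
  induction t with
  | var x => rw [h.2]
  | app f k ts ih =>
    rcases h with ⟨-, rfl⟩ | ⟨-, i, hi⟩
    · rfl
    · exact (ih i hi).trans (Set.subset_iUnion (fun i => (ts i).vars) i)

theorem Fml.mem_of_hasMaxOcc {T : Set Tm} {s : Tm} {E : Fml} (h : E.hasMaxOcc T s) : s ∈ T := by
  induction E with
  | tru | fls => exact h.elim
  | atom p k ts => exact Tm.mem_of_hasMaxOcc h.choose_spec
  | neg E ih | all _ E ih | exi _ E ih => exact ih h
  | conj E₁ E₂ ih₁ ih₂ | disj E₁ E₂ ih₁ ih₂ => exact h.elim ih₁ ih₂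

theorem Fml.vars_subset_free_of_hasMaxOcc {T : Set Tm} {s : Tm} {E : Fml} (hE : E.isQF)
    (h : E.hasMaxOcc T s) : s.vars ⊆ E.free := by
  induction E with
  | tru | fls => exact h.elim
  | atom p k ts =>
    obtain ⟨i, hi⟩ := h
    exact (Tm.vars_subset_of_hasMaxOcc hi).trans (Set.subset_iUnion (fun i => (ts i).vars) i)
  | neg E ih => exact ih hE h
  | conj E₁ E₂ ih₁ ih₂ | disj E₁ E₂ ih₁ ih₂ =>
    rcases h with h | h
    · exact (ih₁ hE.1 h).trans Set.subset_union_left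
    · exact (ih₂ hE.2 h).trans Set.subset_union_right
  | all | exi => exact hE.elim

def Struc.evalHead {D : Type} (N : Struc D) (h : Tm → D) : Tm → D
  | .var x => h (.var x)
  | .app f k ts => N.fn f k (h ∘ ts)

theorem Struc.isStrongHomExcept_termModel {D : Type} {S : Set (ℕ × ℕ)} {σ : Subst}
    {N : Struc D} {b : ℕ → D}
    (hb : ∀ y ∈ σ.dom, ¬ isSTerm S (σ y) → b y = N.evalHead (fun t => (t.inv σ).eval N b) (σ y)) :
    IsStrongHomExcept S (fun t => (t.inv σ).eval N b) (N.termModel fun t => (t.inv σ).eval N b) N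
    where
  pr_iff _ _ _ := Iff.rfl
  fn_eq f k hf ts := by
    by_cases hr : Tm.app f k ts ∈ σ.rng
    · obtain ⟨y, hy, hσy, hinv⟩ := Tm.inv_of_mem_rng hr
      change ((Tm.app f k ts).inv σ).eval N b = _
      rw [hinv, Tm.eval, hb y hy (hσy ▸ hf), hσy]
      rfl
    · change ((Tm.app f k ts).inv σ).eval N b = _
      rw [Tm.inv_app_of_not_mem_rng hr]
      rfl

theorem Struc.evalHead_inv_congr {D : Type} (N : Struc D) {σ : Subst} {t : Tm} (ht : t.vars = ∅)
    {b b' : ℕ → D} (h : ∀ y ∈ σ.dom, (σ y).strictSub t → b y = b' y) :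
    N.evalHead (fun s => (s.inv σ).eval N b) t = N.evalHead (fun s => (s.inv σ).eval N b') t := by
  cases t with
  | var x => exact absurd ht (Set.singleton_ne_empty x)
  | app f k ts =>
    refine congrArg (N.fn f k) (funext fun i => Tm.eval_congr fun x hx => ?_)
    rcases Tm.vars_inv_subset σ (ts i) hx with ⟨hy, hocc⟩ | hx
    · exact h x hy (Tm.strictSub_app_of_occursIn hocc)
    · exact absurd (Set.mem_iUnion.2 ⟨i, hx⟩) (ht.symm ▸ Set.notMem_empty x)

noncomputable def quantPrefix {ι : Type*} (isEx : ι → Prop) (v : ι → ℕ) (L : List ι)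
    (body : Fml) : Fml :=
  L.foldr (fun i acc => if isEx i then Fml.exi (v i) acc else Fml.all (v i) acc) body

theorem exists_sat_of_sat_quantPrefix {ι : Type*} [Preorder ι] {D : Type} {M : Struc D}
    {v : ι → ℕ} (hv : Injective v) (isEx : ι → Prop) (s : ι → (ℕ → D) → D)
    (hs : ∀ j b b', (∀ x, (∀ m, j ≤ m → v m ≠ x) → b x = b' x) → s j b = s j b')
    (body : Fml) {L : List ι} (hL : L.Pairwise (· < ·)) {a : ℕ → D}
    (h : (quantPrefix isEx v L body).sat M a) :
    ∃ b, body.sat M b ∧ (∀ x, (∀ j ∈ L, v j ≠ x) → b x = a x) ∧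
      ∀ j ∈ L, ¬ isEx j → b (v j) = s j b := by
  induction L generalizing a with
  | nil => exact ⟨a, h, fun _ _ => rfl, by simp⟩
  | cons j L ih =>
    obtain ⟨hjL, hL⟩ := List.pairwise_cons.1 hL
    have hvj : ∀ l ∈ L, v l ≠ v j := fun l hl hvl => (hjL l hl).ne' (hv hvl)
    have key : ∀ d, (quantPrefix isEx v L body).sat M (update a (v j) d) →
        ∃ b, body.sat M b ∧ (∀ x, (∀ l ∈ j :: L, v l ≠ x) → b x = a x) ∧
          b (v j) = d ∧ ∀ l ∈ L, ¬ isEx l → b (v l) = s l b := by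
      intro d hd
      obtain ⟨b, hb, hba, hbs⟩ := ih hL hd
      refine ⟨b, hb, fun x hx => ?_, ?_, hbs⟩
      · rw [hba x fun l hl => hx l (.tail _ hl), update_of_ne (hx j List.mem_cons_self).symm]
      · rw [hba (v j) hvj, update_self]
    by_cases hj : isEx j
    · simp only [quantPrefix, List.foldr_cons, if_pos hj, Fml.sat] at h
      obtain ⟨d, hd⟩ := h
      obtain ⟨b, hb, hba, -, hbs⟩ := key d hd
      exact ⟨b, hb, hba, List.forall_mem_cons.2 ⟨fun hj' => absurd hj hj', hbs⟩⟩
    · simp only [quantPrefix, List.foldr_cons, if_neg hj, Fml.sat] at h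
      obtain ⟨b, hb, hba, hbj, hbs⟩ := key (s j a) (h _)
      refine ⟨b, hb, hba, List.forall_mem_cons.2 ⟨fun _ => hbj.trans (hs j a b fun x hx => ?_), hbs⟩⟩
      refine (hba x fun l hl => ?_).symm
      rcases List.mem_cons.1 hl with rfl | hl
      exacts [hx l le_rfl, hx l (hjL l hl).le]

theorem IsLiftBase.disjoint_funs_Ge {F G : Fml} {FS GS : Set (ℕ × ℕ)} {Hg Fe Ge : Fml}
    {θ : Subst} (hbase : IsLiftBase F G FS GS Hg Fe Ge θ) : Disjoint Ge.funs FS := by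
  obtain ⟨-, -, hFG, -, -, -, -, -, -, -, -, -, hGe, -, hG, -⟩ := hbase
  exact (((Set.disjoint_iff_inter_eq_empty.2 hG).mono_left Set.inter_subset_right).union_left
    (Set.disjoint_iff_inter_eq_empty.2 hFG).symm).mono_left hGe

theorem mem_dom_of_isSTerm {S : Set (ℕ × ℕ)} {σ : Subst} {y : ℕ} (h : isSTerm S (σ y)) :
    y ∈ σ.dom := fun hy => by
  rw [hy] at h
  exact h

theorem exists_eq_of_mem_dom {n : ℕ} {v : Fin n → ℕ} {σ : Subst}
    (hσ : ∀ x : ℕ, (∀ i, v i ≠ x) → σ x = Tm.var x) {y : ℕ} (hy : y ∈ σ.dom) : ∃ i, v i = y := by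
  by_contra! h
  exact hy (hσ y h)

theorem statement14_general (F G : Fml) (FS GS : Set (ℕ × ℕ)) (Hg Fe Ge : Fml) (θ : Subst)
    (hbase : IsLiftBase F G FS GS Hg Fe Ge θ)
    (n : ℕ) (tl : Fin n → Tm)
    (htl_range : ∀ t : Tm, (∃ i, tl i = t) ↔
      (isSTerm (FS ∪ GS) t ∧ Fml.hasMaxOcc (STerms (FS ∪ GS)) t Hg))
    (horder : ∀ i j, Tm.strictSub (tl i) (tl j) → i < j)
    (v : Fin n → ℕ) (hv : Function.Injective v)
    (σ : Subst)
    (hσ : ∀ i, σ (v i) = tl i)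
    (hσ' : ∀ x : ℕ, (∀ i, v i ≠ x) → σ x = Tm.var x) :
    entails (lifted n v tl FS (Fml.inv σ Hg)) G := by
  have hGeFS := hbase.disjoint_funs_Ge
  obtain ⟨-, -, -, hHg, -, hGeQF, -, -, hGexp, -, -, -, -, -, -, -, -, -, hHgGe, -⟩ := hbase
  have hrng : ∀ s, Hg.hasMaxOcc (STerms (FS ∪ GS)) s → s ∈ σ.rng := fun s hs => by
    obtain ⟨i, rfl⟩ := (htl_range s).2 ⟨Fml.mem_of_hasMaxOcc hs, hs⟩
    exact ⟨v i, mem_dom_of_isSTerm ((hσ i).symm ▸ Fml.mem_of_hasMaxOcc hs), hσ i⟩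
  have hground : ∀ j, (tl j).vars = ∅ := fun j => Set.subset_empty_iff.1 <|
    hHg.2 ▸ Fml.vars_subset_free_of_hasMaxOcc hHg.1 ((htl_range _).1 ⟨j, rfl⟩).2
  intro D hD M a hsat
  refine hGexp D hD M (fun M' hM' => ?_) a
  obtain ⟨b, hb, -, hstrat⟩ := exists_sat_of_sat_quantPrefix hv (fun i => isSTerm FS (tl i))
    (fun j b => M'.evalHead (fun t => (t.inv σ).eval M' b) (tl j))
    (fun j b b' hbb' => M'.evalHead_inv_congr (hground j) fun y hy hyj => by
      obtain ⟨m, rfl⟩ := exists_eq_of_mem_dom hσ' hy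
      exact hbb' _ fun m' hm' hvm => ((horder m j (hσ m ▸ hyj)).trans_le hm').ne' (hv hvm))
    _ (List.pairwise_lt_finRange n) hsat
  have hHgT : Hg.sat (M'.termModel fun t => (t.inv σ).eval M' b) .var :=
    (Fml.sat_inv_iff hHg.1 σ M' b).1 <| (hM'.isStrongHomExcept.sat_iff (Fml.isQF_inv hHg.1)
      ((Fml.disjoint_funs_inv hrng).mono_right Set.subset_union_right) b).2 hb
  have hT := Struc.isStrongHomExcept_termModel (S := FS) fun y hy hyF => by
    obtain ⟨m, rfl⟩ := exists_eq_of_mem_dom hσ' hy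
    rw [hσ m] at hyF ⊢
    exact hstrat m (List.mem_finRange m) hyF
  have hGeT := (Fml.sat_subst_iff hGeQF).1 (hHgGe Tm ⟨.var 0⟩ _ _ hHgT)
  simp only [Tm.eval_termModel_var] at hGeT
  exact ⟨_, (hT.sat_iff hGeQF hGeFS θ).1 hGeT⟩

/-- Interpolant lifting: given the first five components F, G, 𝔽, 𝔾, H_grd of an
interpolant lifting base (whose remaining components F_exp, G_exp, θ exist), let
t₁,…,tₙ be the 𝔽𝔾-terms with an 𝔽𝔾-terms-maximal occurrence in H_grd, listed so
that strict subterms come first, let v₁,…,vₙ be fresh (distinct) variables, let σ be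
the injective substitution vᵢ ↦ tᵢ, and let Qᵢ = ∃ if tᵢ is an 𝔽-term and Qᵢ = ∀ if
it is a 𝔾-term.  Conclusion: Q₁v₁ … Qₙvₙ H_grd⁻σ relates to F and G as stated. -/
theorem statement14 (F G : Fml) (FS GS : Set (ℕ × ℕ)) (Hg Fe Ge : Fml) (θ : Subst)
    (hbase : IsLiftBase F G FS GS Hg Fe Ge θ)
    (n : ℕ) (tl : Fin n → Tm)
    (htl_inj : Function.Injective tl)
    (htl_range : ∀ t : Tm, (∃ i, tl i = t) ↔
      (isSTerm (FS ∪ GS) t ∧ Fml.hasMaxOcc (STerms (FS ∪ GS)) t Hg))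
    (horder : ∀ i j, Tm.strictSub (tl i) (tl j) → i < j)
    (v : Fin n → ℕ) (hv : Function.Injective v)
    (σ : Subst)
    (hσ : ∀ i, σ (v i) = tl i)
    (hσ' : ∀ x : ℕ, (∀ i, v i ≠ x) → σ x = Tm.var x) :
    entails (lifted n v tl FS (Fml.inv σ Hg)) G :=
  statement14_general F G FS GS Hg Fe Ge θ hbase n tl htl_range horder v hv σ hσ hσ'

end CTIF
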